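/- Let R = (ℤ/2ℤ)[x, y, w]/(y² + x y), graded by assigning x and y degree 1 and w degree 2 (the ideal (y² + x y) is homogeneous for this grading). Let n_s, n_r, n_{rs}, d_o be nonnegative integers, put W = (1 + x)^{n_s} · (1 + y)^{n_r} · (1 + x + y)^{n_{rs}} · (1 + x + w)^{d_o} ∈ R and d = n_s + n_r + n_{rs} + 2 d_o. Then the homogeneous component of W in degree d is nonzero if and only if n_r = 0 or n_{rs} = 0; moreover, when n_r = 0 this top component equals x^{n_s} (x + y)^{n_{rs}} w^{d_o}. -/

import Mathlib

open MvPolynomial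

/-- The ideal `(y² + xy)` in `(ℤ/2ℤ)[x, y, w]`, where `x = X 0`, `y = X 1`, `w = X 2`.
It is homogeneous for the weighted grading in which `x, y` have degree `1` and `w` degree `2`,
so the quotient `R = (ℤ/2ℤ)[x,y,w]/(y²+xy)` is a graded ring, and the degree-`d` homogeneous
component of an element of `R` is the image in `R` of the degree-`d` weighted homogeneous
component of any polynomial representative. -/
noncomputable def relIdeal : Ideal (MvPolynomial (Fin 3) (ZMod 2)) :=
  Ideal.span {(X 1 : MvPolynomial (Fin 3) (ZMod 2)) ^ 2 + X 0 * X 1}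

/-- The quotient map onto `R = (ℤ/2ℤ)[x, y, w]/(y² + xy)`. -/
noncomputable def q : MvPolynomial (Fin 3) (ZMod 2) →+*
    MvPolynomial (Fin 3) (ZMod 2) ⧸ relIdeal :=
  Ideal.Quotient.mk relIdeal

/-- The weights of the grading: `x, y` have degree `1`, `w` has degree `2`. -/
def wt : Fin 3 → ℕ := ![1, 1, 2]

open Finsupp Pointwise

private lemma bd_mul {f g : MvPolynomial (Fin 3) (ZMod 2)} {a b : ℕ}
    (hf : ∀ u ∈ f.support, weight wt u ≤ a) (hg : ∀ u ∈ g.support, weight wt u ≤ b) :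
    ∀ u ∈ (f * g).support, weight wt u ≤ a + b := by
  intro u hu
  obtain ⟨v, hv, w, hw, rfl⟩ := Finset.mem_add.mp (support_mul f g hu)
  rw [map_add]
  exact add_le_add (hf v hv) (hg w hw)

private lemma bd_add {f g : MvPolynomial (Fin 3) (ZMod 2)} {a : ℕ}
    (hf : ∀ u ∈ f.support, weight wt u ≤ a) (hg : ∀ u ∈ g.support, weight wt u ≤ a) :
    ∀ u ∈ (f + g).support, weight wt u ≤ a := by
  intro u hu
  rcases Finset.mem_union.mp (MvPolynomial.support_add hu) with h | h
  exacts [hf u h, hg u h]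

private lemma bd_of_hom {f : MvPolynomial (Fin 3) (ZMod 2)} {n a : ℕ}
    (h : IsWeightedHomogeneous wt f n) (hn : n ≤ a) :
    ∀ u ∈ f.support, weight wt u ≤ a :=
  fun u hu => (h (MvPolynomial.mem_support_iff.mp hu)).le.trans hn

private lemma bd_sub_whc {f : MvPolynomial (Fin 3) (ZMod 2)} {a : ℕ}
    (hf : ∀ u ∈ f.support, weight wt u ≤ a) :
    ∀ u ∈ (f - weightedHomogeneousComponent wt a f).support, weight wt u < a := by
  intro u hu
  rw [MvPolynomial.mem_support_iff, coeff_sub, coeff_weightedHomogeneousComponent] at hu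
  by_cases h : weight wt u = a
  · simp [h] at hu
  · refine lt_of_le_of_ne ?_ h
    apply hf
    rw [MvPolynomial.mem_support_iff]
    intro h0
    simp [h0, h] at hu

private lemma whc_mul {f g : MvPolynomial (Fin 3) (ZMod 2)} {a b : ℕ}
    (hf : ∀ u ∈ f.support, weight wt u ≤ a) (hg : ∀ u ∈ g.support, weight wt u ≤ b) :
    weightedHomogeneousComponent wt (a + b) (f * g) =
      weightedHomogeneousComponent wt a f * weightedHomogeneousComponent wt b g := by
  set F := weightedHomogeneousComponent wt a f with hF
  set G := weightedHomogeneousComponent wt b g with hG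
  have hFh : IsWeightedHomogeneous wt F a := weightedHomogeneousComponent_isWeightedHomogeneous a f
  have hGh : IsWeightedHomogeneous wt G b := weightedHomogeneousComponent_isWeightedHomogeneous b g
  have hfs : ∀ u ∈ F.support, weight wt u ≤ a := fun u hu => (hFh (MvPolynomial.mem_support_iff.mp hu)).le
  have hgs : ∀ u ∈ G.support, weight wt u ≤ b := fun u hu => (hGh (MvPolynomial.mem_support_iff.mp hu)).le
  have hrf := bd_sub_whc hf
  have hrg := bd_sub_whc hg
  have key : f * g = F * G + (F * (g - G) + ((f - F) * G + (f - F) * (g - G))) := by ring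
  have z : ∀ (p q : MvPolynomial (Fin 3) (ZMod 2)),
      (∀ u ∈ p.support, weight wt u ≤ a) → (∀ u ∈ q.support, weight wt u < b) →
      weightedHomogeneousComponent wt (a + b) (p * q) = 0 := by
    intro p r hp hr
    apply weightedHomogeneousComponent_eq_zero'
    intro u hu
    obtain ⟨v, hv, w, hw, rfl⟩ := Finset.mem_add.mp (support_mul p r hu)
    rw [map_add]
    have := hp v hv
    have := hr w hw
    omega
  have z2 : weightedHomogeneousComponent wt (a + b) ((f - F) * G) = 0 := by
    apply weightedHomogeneousComponent_eq_zero'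
    intro u hu
    obtain ⟨v, hv, w, hw, rfl⟩ := Finset.mem_add.mp (support_mul _ _ hu)
    rw [map_add]
    have := hrf v hv
    have := hgs w hw
    omega
  rw [key, map_add, map_add, map_add,
    IsWeightedHomogeneous.weightedHomogeneousComponent_same (hFh.mul hGh),
    z F (g - G) hfs hrg, z2, z (f - F) (g - G) (fun u hu => (hrf u hu).le) hrg]
  ring

private lemma whc_pow {f : MvPolynomial (Fin 3) (ZMod 2)} {a : ℕ}
    (hf : ∀ u ∈ f.support, weight wt u ≤ a) (n : ℕ) :
    (∀ u ∈ (f ^ n).support, weight wt u ≤ n * a) ∧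
      weightedHomogeneousComponent wt (n * a) (f ^ n) =
        (weightedHomogeneousComponent wt a f) ^ n := by
  induction n with
  | zero =>
    constructor
    · intro u hu
      rw [pow_zero] at hu
      have := (isWeightedHomogeneous_one (ZMod 2) wt) (MvPolynomial.mem_support_iff.mp hu)
      omega
    · rw [pow_zero, pow_zero, Nat.zero_mul]
      exact IsWeightedHomogeneous.weightedHomogeneousComponent_same
        (isWeightedHomogeneous_one (ZMod 2) wt)
  | succ n ih =>
    have h1 : ∀ u ∈ (f ^ n * f).support, weight wt u ≤ n * a + a := bd_mul ih.1 hf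
    constructor
    · intro u hu
      rw [pow_succ] at hu
      have := h1 u hu
      have : n * a + a = (n + 1) * a := by ring
      omega
    · rw [pow_succ, pow_succ, Nat.succ_mul, whc_mul ih.1 hf, ih.2]

private lemma homX (i : Fin 3) :
    IsWeightedHomogeneous wt (X i : MvPolynomial (Fin 3) (ZMod 2)) (wt i) :=
  isWeightedHomogeneous_X (ZMod 2) wt i

private lemma wt0 : wt 0 = 1 := rfl
private lemma wt1 : wt 1 = 1 := rfl
private lemma wt2 : wt 2 = 2 := rfl

/-- Let `W = (1+x)^{n_s} (1+y)^{n_r} (1+x+y)^{n_{rs}} (1+x+w)^{d_o}` in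
`R = (ℤ/2ℤ)[x,y,w]/(y²+xy)` and `d = n_s + n_r + n_{rs} + 2d_o`.  The degree-`d` homogeneous
component of `W` (computed as the image in `R` of the degree-`d` weighted homogeneous component
of the defining polynomial representative) is nonzero iff `n_r = 0` or `n_{rs} = 0`, and when
`n_r = 0` it equals `x^{n_s} (x+y)^{n_{rs}} w^{d_o}`. -/
theorem stmt11 (ns nr nrs dO : ℕ) :
    (q (weightedHomogeneousComponent wt (ns + nr + nrs + 2 * dO)
        ((1 + X 0) ^ ns * (1 + X 1) ^ nr * (1 + X 0 + X 1) ^ nrs * (1 + X 0 + X 2) ^ dO)) ≠ 0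
      ↔ nr = 0 ∨ nrs = 0) ∧
    (nr = 0 →
      q (weightedHomogeneousComponent wt (ns + nr + nrs + 2 * dO)
          ((1 + X 0) ^ ns * (1 + X 1) ^ nr * (1 + X 0 + X 1) ^ nrs * (1 + X 0 + X 2) ^ dO))
        = q (X 0 ^ ns * (X 0 + X 1) ^ nrs * X 2 ^ dO)) := by
  classical
  -- basic homogeneity facts
  have h1 : IsWeightedHomogeneous wt (1 : MvPolynomial (Fin 3) (ZMod 2)) 0 :=
    isWeightedHomogeneous_one (ZMod 2) wt
  have hX0 : IsWeightedHomogeneous wt (X 0 : MvPolynomial (Fin 3) (ZMod 2)) 1 := by have := homX 0; rwa [wt0] at this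
  have hX1 : IsWeightedHomogeneous wt (X 1 : MvPolynomial (Fin 3) (ZMod 2)) 1 := by have := homX 1; rwa [wt1] at this
  have hX2 : IsWeightedHomogeneous wt (X 2 : MvPolynomial (Fin 3) (ZMod 2)) 2 := by have := homX 2; rwa [wt2] at this
  -- degree bounds for the four factors
  have bA := bd_add (bd_of_hom h1 (by norm_num)) (bd_of_hom hX0 le_rfl)
  have bB := bd_add (bd_of_hom h1 (by norm_num)) (bd_of_hom hX1 le_rfl)
  have bC := bd_add bA (bd_of_hom hX1 le_rfl)
  have bD : ∀ u ∈ (1 + X 0 + X 2 : MvPolynomial (Fin 3) (ZMod 2)).support, weight wt u ≤ 2 :=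
    bd_add (bd_add (bd_of_hom h1 (by norm_num)) (bd_of_hom hX0 (by norm_num)))
      (bd_of_hom hX2 le_rfl)
  -- top components of the four factors
  have cA : weightedHomogeneousComponent wt 1 (1 + X 0 : MvPolynomial (Fin 3) (ZMod 2)) = X 0 := by
    rw [map_add, IsWeightedHomogeneous.weightedHomogeneousComponent_ne _ h1 one_ne_zero,
      IsWeightedHomogeneous.weightedHomogeneousComponent_same hX0, zero_add]
  have cB : weightedHomogeneousComponent wt 1 (1 + X 1 : MvPolynomial (Fin 3) (ZMod 2)) = X 1 := by
    rw [map_add, IsWeightedHomogeneous.weightedHomogeneousComponent_ne _ h1 one_ne_zero,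
      IsWeightedHomogeneous.weightedHomogeneousComponent_same hX1, zero_add]
  have cC : weightedHomogeneousComponent wt 1 (1 + X 0 + X 1 : MvPolynomial (Fin 3) (ZMod 2))
      = X 0 + X 1 := by
    rw [map_add, map_add, IsWeightedHomogeneous.weightedHomogeneousComponent_ne _ h1 one_ne_zero,
      IsWeightedHomogeneous.weightedHomogeneousComponent_same hX0,
      IsWeightedHomogeneous.weightedHomogeneousComponent_same hX1, zero_add]
  have cD : weightedHomogeneousComponent wt 2 (1 + X 0 + X 2 : MvPolynomial (Fin 3) (ZMod 2))
      = X 2 := by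
    rw [map_add, map_add, IsWeightedHomogeneous.weightedHomogeneousComponent_ne _ h1 (by norm_num),
      IsWeightedHomogeneous.weightedHomogeneousComponent_ne _ hX0 (by norm_num),
      IsWeightedHomogeneous.weightedHomogeneousComponent_same hX2, zero_add, zero_add]
  -- powers
  have pA := whc_pow bA ns
  have pB := whc_pow bB nr
  have pC := whc_pow bC nrs
  have pD := whc_pow bD dO
  rw [Nat.mul_one] at pA pB pC
  -- the top component of the whole product
  have bAB := bd_mul pA.1 pB.1
  have bABC := bd_mul bAB pC.1
  have e2d : dO * 2 = 2 * dO := Nat.mul_comm _ _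
  have top : weightedHomogeneousComponent wt (ns + nr + nrs + 2 * dO)
      (((1 + X 0) ^ ns * (1 + X 1) ^ nr * (1 + X 0 + X 1) ^ nrs * (1 + X 0 + X 2) ^ dO :
        MvPolynomial (Fin 3) (ZMod 2)))
      = X 0 ^ ns * X 1 ^ nr * (X 0 + X 1) ^ nrs * X 2 ^ dO := by
    rw [← e2d, whc_mul bABC pD.1, whc_mul bAB pC.1, whc_mul pA.1 pB.1,
      pA.2, pB.2, pC.2, pD.2, cA, cB, cC, cD]
  rw [top]
  -- the relation element
  set p : MvPolynomial (Fin 3) (ZMod 2) := X 1 ^ 2 + X 0 * X 1 with hp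
  -- nonvanishing: substitution homomorphisms
  have hchar : (2 : MvPolynomial (Fin 3) (ZMod 2)) = 0 := by
    exact_mod_cast CharP.cast_eq_zero (MvPolynomial (Fin 3) (ZMod 2)) 2
  have nonzero_of_subst : ∀ (v : Fin 3 → MvPolynomial (Fin 3) (ZMod 2)),
      (aeval v) p = 0 →
      (aeval v) ((X 0 ^ ns * X 1 ^ nr * (X 0 + X 1) ^ nrs * X 2 ^ dO :
        MvPolynomial (Fin 3) (ZMod 2))) ≠ 0 →
      q (X 0 ^ ns * X 1 ^ nr * (X 0 + X 1) ^ nrs * X 2 ^ dO) ≠ 0 := by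
    intro v hv hT h0
    apply hT
    rw [show q = Ideal.Quotient.mk relIdeal from rfl, Ideal.Quotient.eq_zero_iff_mem,
      relIdeal] at h0
    obtain ⟨c, hc⟩ := Ideal.mem_span_singleton'.mp h0
    rw [← hc, map_mul, hv, mul_zero]
  constructor
  · constructor
    · -- q(top) ≠ 0 → nr = 0 ∨ nrs = 0
      intro hne
      by_contra hcon
      push_neg at hcon
      obtain ⟨hnr, hnrs⟩ := hcon
      apply hne
      obtain ⟨nr', rfl⟩ := Nat.exists_eq_succ_of_ne_zero hnr
      obtain ⟨nrs', rfl⟩ := Nat.exists_eq_succ_of_ne_zero hnrs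
      rw [show q = Ideal.Quotient.mk relIdeal from rfl, Ideal.Quotient.eq_zero_iff_mem, relIdeal]
      exact Ideal.mem_span_singleton'.mpr
        ⟨X 0 ^ ns * X 1 ^ nr' * (X 0 + X 1) ^ nrs' * X 2 ^ dO, by
          rw [← hp, pow_succ (X 1 : MvPolynomial (Fin 3) (ZMod 2)) nr',
            pow_succ (X 0 + X 1 : MvPolynomial (Fin 3) (ZMod 2)) nrs']
          ring⟩
    · -- nr = 0 ∨ nrs = 0 → q(top) ≠ 0
      rintro (rfl | rfl)
      · apply nonzero_of_subst ![X 0, 0, X 2]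
        · simp [hp]
        · simp only [map_mul, map_pow, map_add, aeval_X, Matrix.cons_val_zero,
            Matrix.cons_val_one, Matrix.head_cons, Matrix.cons_val_two, Matrix.tail_cons]
          rw [add_zero, pow_zero, mul_one]
          exact mul_ne_zero (mul_ne_zero (pow_ne_zero _ (X_ne_zero _))
            (pow_ne_zero _ (X_ne_zero _))) (pow_ne_zero _ (X_ne_zero _))
      · apply nonzero_of_subst ![X 1, X 1, X 2]
        · have : (aeval ![X 1, X 1, X 2]) p
              = (X 1 : MvPolynomial (Fin 3) (ZMod 2)) ^ 2 + X 1 * X 1 := by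
            simp [hp]
          rw [this]
          have h22 : (X 1 : MvPolynomial (Fin 3) (ZMod 2)) ^ 2 + X 1 * X 1
              = 2 * X 1 ^ 2 := by ring
          rw [h22, hchar, zero_mul]
        · simp only [map_mul, map_pow, map_add, aeval_X, Matrix.cons_val_zero,
            Matrix.cons_val_one, Matrix.head_cons, Matrix.cons_val_two, Matrix.tail_cons]
          rw [pow_zero, mul_one]
          exact mul_ne_zero (mul_ne_zero (pow_ne_zero _ (X_ne_zero _))
            (pow_ne_zero _ (X_ne_zero _))) (pow_ne_zero _ (X_ne_zero _))
  · rintro rfl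
    rw [pow_zero, mul_one]
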